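/- arXiv:cs/0603014 — 10 statements merged into one kernel-verified Lean document; each statement's English description precedes it below -/
import Mathlib

section
/- If ρ is a near order function on an F-algebra R and the set M_ρ = {f ∈ R : ρ(f) > ρ(1)} is nonempty, then M_ρ is infinite and ρ(M_ρ) is an infinite set of natural numbers. -/
/-- A near order (n-order) function on an `F`-algebra `R`: axioms (N0)–(N4). -/
def IsNearOrder (F : Type*) {R : Type*} [Field F] [CommRing R] [Algebra F R]
    (ρ : R → WithBot ℕ) : Prop :=
  (∀ f : R, ρ f = ⊥ ↔ f = 0) ∧
  (∀ (c : F) (f : R), c ≠ 0 → ρ (c • f) = ρ f) ∧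
  (∀ f g : R, ρ (f + g) ≤ max (ρ f) (ρ g)) ∧
  (∀ f g h : R, ρ f < ρ g → ρ (f * h) ≤ ρ (g * h)) ∧
  (∀ f g h : R, ρ f < ρ g → ρ 1 < ρ h → ρ (f * h) < ρ (g * h)) ∧
  (∀ f g : R, ρ f = ρ g → ρ 1 < ρ f → ρ 1 < ρ g →
    ∃ c : F, c ≠ 0 ∧ ρ (f - c • g) < ρ f)

/-! By the strict part of (N3), multiplying by an element `f` of `M_ρ` strictly raises `ρ`,
so `ρ (f ^ n)` is strictly increasing in `n`. Hence the powers `f, f², …` lie in `M_ρ` and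
have pairwise distinct values under `ρ`. -/

namespace IsNearOrder

variable {F R : Type*} [Field F] [CommRing R] [Algebra F R] {ρ : R → WithBot ℕ}

theorem strictMono_pow (hρ : IsNearOrder F ρ) {f : R} (hf : ρ 1 < ρ f) :
    StrictMono fun n : ℕ => ρ (f ^ n) := by
  refine strictMono_nat_of_lt_succ fun n => ?_
  induction n with
  | zero => simpa using hf
  | succ n ih => simpa only [pow_succ] using hρ.2.2.2.2.1 _ _ f ih hf

theorem one_lt_pow_succ (hρ : IsNearOrder F ρ) {f : R} (hf : ρ 1 < ρ f) (n : ℕ) :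
    ρ 1 < ρ (f ^ (n + 1)) := by
  simpa using hρ.strictMono_pow hf n.succ_pos

end IsNearOrder

/-- if `M_ρ` is nonempty then `M_ρ` is infinite and `ρ(M_ρ)` is infinite. -/
theorem stmt_0 {F R : Type*} [Field F] [CommRing R] [Algebra F R]
    (ρ : R → WithBot ℕ) (hρ : IsNearOrder F ρ)
    (hM : {f : R | ρ 1 < ρ f}.Nonempty) :
    {f : R | ρ 1 < ρ f}.Infinite ∧ (ρ '' {f : R | ρ 1 < ρ f}).Infinite := by
  obtain ⟨f, hf⟩ := hM
  have himg : (ρ '' {f : R | ρ 1 < ρ f}).Infinite :=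
    Set.infinite_of_injective_forall_mem (f := fun n : ℕ => ρ (f ^ (n + 1)))
      ((hρ.strictMono_pow hf).injective.comp Nat.succ_injective)
      fun n => ⟨f ^ (n + 1), hρ.one_lt_pow_succ hf n, rfl⟩
  exact ⟨himg.of_image _, himg⟩
end

section
/- Let R = F[X,Y]/(XY - 1), and for f ∈ R write f uniquely as f = f₁(x) + f₂(y) with f₁, f₂ ∈ F[T], f₂(0) = 0. Define ρ(0) = -∞, ρ(f) = 0 if f₁ ≠ 0 and f₂ = 0, and ρ(f) = deg(f₂) if f₂ ≠ 0. Then ρ is a near order function on R. -/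
open scoped Classical

/-- The function `ρ` on `R = F[X,Y]/(XY-1)` (realized as Laurent polynomials,
with `x = T` and `y = T⁻¹`): `ρ(0) = -∞`, `ρ(f) = 0` if `f` has no negative-degree
part (`f₂ = 0`), and `ρ(f) = deg f₂` (the negative of the least exponent occurring
in `f`) otherwise. -/
noncomputable def laurentRho (F : Type*) [Field F] (f : LaurentPolynomial F) : WithBot ℕ :=
  if h : f = 0 then ⊥
  else (((-(f.coeff.support.min' (Finsupp.support_nonempty_iff.mpr (mt AddMonoidAlgebra.coeff_eq_zero.mp h)))) ⊔ 0).toNat : ℕ)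

/-!
Write `x = T`, `y = T⁻¹` and let `ord f` be the least exponent of `T` in a Laurent polynomial
`f ≠ 0`, so that `ρ f = max (-ord f) 0`. The order is additive on products (the lowest terms
multiply, `F` being a domain), satisfies `min (ord f) (ord g) ≤ ord (f + g)`, and when
`ord f = ord g` a scalar multiple of `g` cancels the lowest term of `f`. The axioms follow because
`m ↦ max (-m) 0` is antitone, and strictly antitone on negative `m`, which is exactly the range
where `ρ` exceeds `ρ 1 = 0`.
-/

namespace LaurentPolynomial

section Semiring

variable {R : Type*} [Semiring R] {f g : R[T;T⁻¹]} {n : ℤ}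

/-- The least exponent of `T` occurring in `f`, with junk value `0` at `f = 0`. -/
noncomputable def order (f : R[T;T⁻¹]) : ℤ :=
  if h : f = 0 then 0
  else f.coeff.support.min' (Finsupp.support_nonempty_iff.mpr (mt AddMonoidAlgebra.coeff_eq_zero.mp h))

theorem coeff_order_ne_zero (hf : f ≠ 0) : f.coeff f.order ≠ 0 := by
  rw [order, dif_neg hf, ← Finsupp.mem_support_iff]
  exact Finset.min'_mem _ _

theorem order_le_of_coeff_ne_zero (hn : f.coeff n ≠ 0) : f.order ≤ n := by
  have hf : f ≠ 0 := by rintro rfl; exact hn rfl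
  rw [order, dif_neg hf]
  exact Finset.min'_le _ _ (Finsupp.mem_support_iff.mpr hn)

theorem coeff_eq_zero_of_lt_order (hn : n < f.order) : f.coeff n = 0 := by
  by_contra h
  exact (order_le_of_coeff_ne_zero h).not_gt hn

theorem le_order_of_coeff_eq_zero (hf : f ≠ 0) (h : ∀ m < n, f.coeff m = 0) : n ≤ f.order := by
  by_contra! hlt
  exact coeff_order_ne_zero hf (h _ hlt)

theorem order_eq_of_coeff_ne_zero (hn : f.coeff n ≠ 0) (h : ∀ m < n, f.coeff m = 0) :
    f.order = n :=
  (order_le_of_coeff_ne_zero hn).antisymm <|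
    le_order_of_coeff_eq_zero (by rintro rfl; exact hn rfl) h

theorem min_order_le_order_add (hfg : f + g ≠ 0) : min f.order g.order ≤ (f + g).order :=
  le_order_of_coeff_eq_zero hfg fun m hm => by
    rw [AddMonoidAlgebra.coeff_add, Finsupp.add_apply,
      coeff_eq_zero_of_lt_order (hm.trans_le (min_le_left _ _)),
      coeff_eq_zero_of_lt_order (hm.trans_le (min_le_right _ _)), add_zero]

@[simp]
theorem order_one [Nontrivial R] : (1 : R[T;T⁻¹]).order = 0 :=
  order_eq_of_coeff_ne_zero (by simp) fun m hm => by
    rw [← Finsupp.notMem_support_iff, AddMonoidAlgebra.support_coeff_one]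
    simpa using hm.ne

variable [NoZeroDivisors R]

theorem order_smul {c : R} (hc : c ≠ 0) (f : R[T;T⁻¹]) : (c • f).order = f.order := by
  obtain rfl | hf := eq_or_ne f 0
  · rw [smul_zero]
  refine order_eq_of_coeff_ne_zero ?_ fun m hm => ?_
  · simpa [AddMonoidAlgebra.coeff_smul] using mul_ne_zero hc (coeff_order_ne_zero hf)
  · simp [AddMonoidAlgebra.coeff_smul, coeff_eq_zero_of_lt_order hm]

/-- The lowest terms of `f` and `g` multiply to the lowest term of `f * g`, since in `ℤ` the sum
of the two minimal exponents is reached only once. -/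
theorem order_mul (hf : f ≠ 0) (hg : g ≠ 0) : (f * g).order = f.order + g.order := by
  refine order_eq_of_coeff_ne_zero ?_ fun m hm => ?_
  · have hunique : UniqueAdd f.coeff.support g.coeff.support f.order g.order :=
      fun a b ha hb hab => by
        have := order_le_of_coeff_ne_zero (Finsupp.mem_support_iff.mp ha)
        have := order_le_of_coeff_ne_zero (Finsupp.mem_support_iff.mp hb)
        omega
    rw [AddMonoidAlgebra.coeff_mul_add_of_uniqueAdd hunique]
    exact mul_ne_zero (coeff_order_ne_zero hf) (coeff_order_ne_zero hg)
  · rw [← Finsupp.notMem_support_iff]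
    intro hmem
    obtain ⟨a, ha, b, hb, rfl⟩ :=
      Finset.mem_add.mp (AddMonoidAlgebra.support_coeff_mul_subset f g hmem)
    have := order_le_of_coeff_ne_zero (Finsupp.mem_support_iff.mp ha)
    have := order_le_of_coeff_ne_zero (Finsupp.mem_support_iff.mp hb)
    omega

end Semiring

theorem order_lt_order_sub {R : Type*} [Ring R] {f g : R[T;T⁻¹]} (hfg : f - g ≠ 0)
    (h : f.order = g.order) (hc : f.coeff f.order = g.coeff g.order) :
    f.order < (f - g).order :=
  le_order_of_coeff_eq_zero hfg fun m hm => by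
    rw [AddMonoidAlgebra.coeff_sub, Finsupp.sub_apply]
    obtain hm | rfl := (Int.lt_add_one_iff.mp hm).lt_or_eq
    · rw [coeff_eq_zero_of_lt_order hm, coeff_eq_zero_of_lt_order (h ▸ hm), sub_zero]
    · rw [hc, h, sub_self]

end LaurentPolynomial

open LaurentPolynomial

section laurentRho

variable {F : Type*} [Field F] {f g h : F[T;T⁻¹]}

theorem laurentRho_zero : laurentRho F 0 = ⊥ := dif_pos rfl

theorem laurentRho_of_ne_zero (hf : f ≠ 0) : laurentRho F f = ((-f.order).toNat : ℕ) := by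
  rw [laurentRho, dif_neg hf, order, dif_neg hf]
  congr 1
  omega

theorem laurentRho_one : laurentRho F 1 = (0 : ℕ) := by
  rw [laurentRho_of_ne_zero one_ne_zero, order_one]
  rfl

theorem laurentRho_eq_bot_iff : laurentRho F f = ⊥ ↔ f = 0 := by
  refine ⟨fun hρ => ?_, fun hf => hf ▸ laurentRho_zero⟩
  by_contra hf
  rw [laurentRho_of_ne_zero hf] at hρ
  exact WithBot.coe_ne_bot hρ

theorem laurentRho_smul {c : F} (hc : c ≠ 0) (f : F[T;T⁻¹]) :
    laurentRho F (c • f) = laurentRho F f := by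
  obtain rfl | hf := eq_or_ne f 0
  · rw [smul_zero]
  rw [laurentRho_of_ne_zero (smul_ne_zero hc hf), laurentRho_of_ne_zero hf, order_smul hc]

theorem laurentRho_add_le (f g : F[T;T⁻¹]) :
    laurentRho F (f + g) ≤ max (laurentRho F f) (laurentRho F g) := by
  obtain rfl | hf := eq_or_ne f 0
  · simp [laurentRho_zero]
  obtain rfl | hg := eq_or_ne g 0
  · simp [laurentRho_zero]
  obtain hfg | hfg := eq_or_ne (f + g) 0
  · simp [hfg, laurentRho_zero]
  have := min_order_le_order_add hfg
  rw [laurentRho_of_ne_zero hfg, laurentRho_of_ne_zero hf, laurentRho_of_ne_zero hg,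
    ← WithBot.coe_mono.map_max]
  exact_mod_cast (by omega : (-(f + g).order).toNat ≤ max (-f.order).toNat (-g.order).toNat)

theorem ne_zero_of_laurentRho_lt (hfg : laurentRho F f < laurentRho F g) : g ≠ 0 := by
  rintro rfl
  rw [laurentRho_zero] at hfg
  exact not_lt_bot hfg

theorem laurentRho_mul_le_of_lt (hfg : laurentRho F f < laurentRho F g) :
    laurentRho F (f * h) ≤ laurentRho F (g * h) := by
  have hg := ne_zero_of_laurentRho_lt hfg
  obtain rfl | hf := eq_or_ne f 0
  · simp [laurentRho_zero]
  obtain rfl | hh := eq_or_ne h 0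
  · simp
  rw [laurentRho_of_ne_zero hf, laurentRho_of_ne_zero hg] at hfg
  rw [laurentRho_of_ne_zero (mul_ne_zero hf hh), laurentRho_of_ne_zero (mul_ne_zero hg hh),
    order_mul hf hh, order_mul hg hh]
  have : (-f.order).toNat < (-g.order).toNat := by exact_mod_cast hfg
  exact_mod_cast (by omega : (-(f.order + h.order)).toNat ≤ (-(g.order + h.order)).toNat)

theorem laurentRho_mul_lt_of_lt (hfg : laurentRho F f < laurentRho F g)
    (h1h : laurentRho F 1 < laurentRho F h) : laurentRho F (f * h) < laurentRho F (g * h) := by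
  have hg := ne_zero_of_laurentRho_lt hfg
  have hh := ne_zero_of_laurentRho_lt h1h
  rw [laurentRho_one, laurentRho_of_ne_zero hh] at h1h
  have : 0 < (-h.order).toNat := by exact_mod_cast h1h
  rw [laurentRho_of_ne_zero (mul_ne_zero hg hh), order_mul hg hh]
  obtain rfl | hf := eq_or_ne f 0
  · simp [laurentRho_zero]
  rw [laurentRho_of_ne_zero hf, laurentRho_of_ne_zero hg] at hfg
  rw [laurentRho_of_ne_zero (mul_ne_zero hf hh), order_mul hf hh]
  have : (-f.order).toNat < (-g.order).toNat := by exact_mod_cast hfg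
  exact_mod_cast (by omega : (-(f.order + h.order)).toNat < (-(g.order + h.order)).toNat)

theorem exists_laurentRho_sub_smul_lt (hfg : laurentRho F f = laurentRho F g)
    (h1f : laurentRho F 1 < laurentRho F f) :
    ∃ c : F, c ≠ 0 ∧ laurentRho F (f - c • g) < laurentRho F f := by
  have hf := ne_zero_of_laurentRho_lt h1f
  have hg := ne_zero_of_laurentRho_lt (hfg ▸ h1f)
  rw [laurentRho_one, laurentRho_of_ne_zero hf] at h1f
  rw [laurentRho_of_ne_zero hf, laurentRho_of_ne_zero hg] at hfg
  have hpos : 0 < (-f.order).toNat := by exact_mod_cast h1f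
  have horder : f.order = g.order := by
    have : (-f.order).toNat = (-g.order).toNat := by exact_mod_cast hfg
    omega
  set c := f.coeff f.order / g.coeff g.order
  have hc : c ≠ 0 := div_ne_zero (coeff_order_ne_zero hf) (coeff_order_ne_zero hg)
  refine ⟨c, hc, ?_⟩
  obtain hz | hz := eq_or_ne (f - c • g) 0
  · rw [hz, laurentRho_zero, laurentRho_of_ne_zero hf]
    exact WithBot.bot_lt_coe _
  have hlt : f.order < (f - c • g).order := by
    refine order_lt_order_sub hz (by rw [order_smul hc, horder]) ?_
    rw [order_smul hc, AddMonoidAlgebra.coeff_smul, Finsupp.smul_apply, smul_eq_mul,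
      div_mul_cancel₀ _ (coeff_order_ne_zero hg)]
  rw [laurentRho_of_ne_zero hz, laurentRho_of_ne_zero hf]
  exact_mod_cast (by omega : (-(f - c • g).order).toNat < (-f.order).toNat)

end laurentRho

/-- `laurentRho` is a near order function on `F[X,Y]/(XY-1)`. -/
theorem stmt_2 (F : Type*) [Field F] :
    IsNearOrder F (laurentRho F) :=
  ⟨fun _ => laurentRho_eq_bot_iff, fun _ _ hc => laurentRho_smul hc _, laurentRho_add_le,
    fun _ _ _ => laurentRho_mul_le_of_lt, fun _ _ _ => laurentRho_mul_lt_of_lt,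
    fun _ _ hfg h1f _ => exists_laurentRho_sub_smul_lt hfg h1f⟩
end

section
/- A function ρ : R → ℕ ∪ {-∞} on an F-algebra R is an order function if and only if ρ is a near order function and the set U_ρ = {f ∈ R : ρ(f) ≤ ρ(1)} equals F (the scalars together with 0). -/
/-- An order function on an `F`-algebra `R`: axioms (O0)–(O4). -/
def IsOrder (F : Type*) {R : Type*} [Field F] [CommRing R] [Algebra F R]
    (ρ : R → WithBot ℕ) : Prop :=
  (∀ f : R, ρ f = ⊥ ↔ f = 0) ∧
  (∀ (c : F) (f : R), c ≠ 0 → ρ (c • f) = ρ f) ∧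
  (∀ f g : R, ρ (f + g) ≤ max (ρ f) (ρ g)) ∧
  (∀ f g h : R, ρ f < ρ g → h ≠ 0 → ρ (f * h) < ρ (g * h)) ∧
  (∀ f g : R, ρ f = ρ g → ρ f ≠ ⊥ → ∃ c : F, c ≠ 0 ∧ ρ (f - c • g) < ρ g)

section

variable {F R : Type*} [Field F] [CommRing R] [Algebra F R] {ρ : R → WithBot ℕ}

lemma apply_algebraMap_eq_apply_one (hsmul : ∀ (c : F) (f : R), c ≠ 0 → ρ (c • f) = ρ f)
    {c : F} (hc : c ≠ 0) : ρ (algebraMap F R c) = ρ 1 := by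
  rw [Algebra.algebraMap_eq_smul_one, hsmul c 1 hc]

lemma mul_algebraMap_eq_smul (f : R) (c : F) : f * algebraMap F R c = c • f := by
  rw [Algebra.smul_def, mul_comm]

end

namespace IsOrder

variable {F R : Type*} [Field F] [CommRing R] [Algebra F R] {ρ : R → WithBot ℕ}

lemma apply_zero (hρ : IsOrder F ρ) : ρ 0 = ⊥ := (hρ.1 0).2 rfl

lemma bot_lt_apply (hρ : IsOrder F ρ) {f : R} (hf : f ≠ 0) : ⊥ < ρ f :=
  bot_lt_iff_ne_bot.2 (mt (hρ.1 f).1 hf)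

lemma noZeroDivisors (hρ : IsOrder F ρ) : NoZeroDivisors R where
  eq_zero_or_eq_zero_of_mul_eq_zero {a b} hab := by
    by_contra! h
    have := hρ.2.2.2.1 0 a b (hρ.apply_zero ▸ hρ.bot_lt_apply h.1) h.2
    rw [zero_mul, hab, hρ.apply_zero] at this
    exact lt_irrefl _ this

lemma eq_zero_of_lt_apply_one (hρ : IsOrder F ρ) {g : R} (hg : ρ g < ρ 1) : g = 0 := by
  have := hρ.noZeroDivisors
  by_contra hg0
  have hdec : ∀ n : ℕ, ρ (g ^ (n + 1)) < ρ (g ^ n) := fun n => by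
    simpa only [one_mul, ← pow_succ'] using hρ.2.2.2.1 g 1 (g ^ n) hg (pow_ne_zero n hg0)
  exact (RelEmbedding.natGT (fun n => ρ (g ^ n)) hdec).not_wellFounded wellFounded_lt

lemma isNearOrder (hρ : IsOrder F ρ) : IsNearOrder F ρ := by
  obtain ⟨h0, hsmul, hadd, hmul, hsub⟩ := hρ
  have hpos : ∀ {f : R}, ρ 1 < ρ f → f ≠ 0 := fun {f} h1f hf =>
    not_lt_bot (((h0 f).2 hf) ▸ h1f)
  refine ⟨h0, hsmul, hadd, fun f g h hfg => ?_, fun f g h hfg h1h => hmul f g h hfg (hpos h1h),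
    fun f g hfg h1f _ => ?_⟩
  · rcases eq_or_ne h 0 with rfl | hh
    · simp only [mul_zero, le_refl]
    · exact (hmul f g h hfg hh).le
  · obtain ⟨c, hc, hlt⟩ := hsub f g hfg (mt (h0 f).1 (hpos h1f))
    exact ⟨c, hc, hfg ▸ hlt⟩

lemma setOf_le_apply_one_eq_range (hρ : IsOrder F ρ) :
    {f : R | ρ f ≤ ρ 1} = Set.range (algebraMap F R) := by
  refine Set.Subset.antisymm (fun f hf => ?_) ?_
  · rcases eq_or_ne f 0 with rfl | hf0
    · exact ⟨0, map_zero _⟩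
    rcases (Set.mem_ofPred.1 hf).lt_or_eq with hlt | heq
    · exact absurd (hρ.eq_zero_of_lt_apply_one hlt) hf0
    obtain ⟨c, -, hlt⟩ := hρ.2.2.2.2 f 1 heq (mt (hρ.1 f).1 hf0)
    have hfc : f - c • 1 = 0 := hρ.eq_zero_of_lt_apply_one hlt
    exact ⟨c, by rw [Algebra.algebraMap_eq_smul_one, ← sub_eq_zero.1 hfc]⟩
  · rintro _ ⟨c, rfl⟩
    rcases eq_or_ne c 0 with rfl | hc
    · simp only [Set.mem_ofPred, map_zero, hρ.apply_zero, bot_le]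
    · exact (apply_algebraMap_eq_apply_one hρ.2.1 hc).le

end IsOrder

namespace IsNearOrder

variable {F R : Type*} [Field F] [CommRing R] [Algebra F R] {ρ : R → WithBot ℕ}

lemma isOrder_of_setOf_le_apply_one_eq_range (hρ : IsNearOrder F ρ)
    (hU : {f : R | ρ f ≤ ρ 1} = Set.range (algebraMap F R)) : IsOrder F ρ := by
  obtain ⟨h0, hsmul, hadd, -, hmul, hsub⟩ := hρ
  have hscalar : ∀ {f : R}, ¬ ρ 1 < ρ f → ∃ c : F, algebraMap F R c = f := fun h1f =>
    hU.subset (not_lt.1 h1f)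
  have hne : ∀ {c : F}, ρ (algebraMap F R c) ≠ ⊥ → c ≠ 0 := fun hc h =>
    hc ((h0 _).2 (by rw [h, map_zero]))
  refine ⟨h0, hsmul, hadd, fun f g h hfg hh => ?_, fun f g hfg hf => ?_⟩
  · by_cases h1h : ρ 1 < ρ h
    · exact hmul f g h hfg h1h
    obtain ⟨c, rfl⟩ := hscalar h1h
    have hc : c ≠ 0 := fun h => hh (by rw [h, map_zero])
    rwa [mul_algebraMap_eq_smul, mul_algebraMap_eq_smul, hsmul c f hc, hsmul c g hc]
  · by_cases h1f : ρ 1 < ρ f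
    · obtain ⟨c, hc, hlt⟩ := hsub f g hfg h1f (hfg ▸ h1f)
      exact ⟨c, hc, hfg ▸ hlt⟩
    obtain ⟨a, rfl⟩ := hscalar h1f
    obtain ⟨b, rfl⟩ := hscalar (hfg ▸ h1f)
    have hb : b ≠ 0 := hne (hfg ▸ hf)
    refine ⟨a / b, div_ne_zero (hne hf) hb, ?_⟩
    rw [Algebra.smul_def, ← map_mul, div_mul_cancel₀ a hb, sub_self, (h0 0).2 rfl]
    exact bot_lt_iff_ne_bot.2 (hfg ▸ hf)

end IsNearOrder

/-- `ρ` is an order function iff it is a near order function and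
`U_ρ = {f : ρ(f) ≤ ρ(1)}` consists exactly of the scalars (the image of `F` in `R`). -/
theorem stmt_3 {F R : Type*} [Field F] [CommRing R] [Algebra F R]
    (ρ : R → WithBot ℕ) :
    IsOrder F ρ ↔
      (IsNearOrder F ρ ∧ {f : R | ρ f ≤ ρ 1} = Set.range (algebraMap F R)) :=
  ⟨fun hρ => ⟨hρ.isNearOrder, hρ.setOf_le_apply_one_eq_range⟩,
    fun ⟨hρ, hU⟩ => hρ.isOrder_of_setOf_le_apply_one_eq_range hU⟩
end

section
/- If ρ is a near order function on an F-algebra R, then no element of M_ρ = {f ∈ R : ρ(f) > ρ(1)} is a zero divisor: for f ∈ M_ρ and g ∈ R with g ≠ 0, we have fg ≠ 0. -/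
namespace IsNearOrder

variable {F R : Type*} [Field F] [CommRing R] [Algebra F R] {ρ : R → WithBot ℕ}

theorem bot_lt_iff_ne_zero (hρ : IsNearOrder F ρ) {f : R} : ⊥ < ρ f ↔ f ≠ 0 := by
  rw [bot_lt_iff_ne_bot, Ne, hρ.1 f]

/-- (N3) with `f = 0`: multiplying by an element of `M_ρ` keeps `ρ` above `ρ 0 = ⊥`. -/
theorem mul_ne_zero_of_one_lt (hρ : IsNearOrder F ρ) {g h : R} (hg : g ≠ 0)
    (hh : ρ 1 < ρ h) : g * h ≠ 0 := by
  have hzero : ρ (0 : R) = ⊥ := (hρ.1 0).mpr rfl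
  have hg' : ρ 0 < ρ g := hzero ▸ hρ.bot_lt_iff_ne_zero.mpr hg
  have hgh : ρ (0 * h) < ρ (g * h) := hρ.2.2.2.2.1 0 g h hg' hh
  rw [zero_mul, hzero] at hgh
  exact hρ.bot_lt_iff_ne_zero.mp hgh

end IsNearOrder

/-- elements of `M_ρ` are not zero divisors. -/
theorem stmt_4 {F R : Type*} [Field F] [CommRing R] [Algebra F R]
    (ρ : R → WithBot ℕ) (hρ : IsNearOrder F ρ)
    (f g : R) (hf : ρ 1 < ρ f) (hg : g ≠ 0) :
    f * g ≠ 0 :=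
  mul_comm g f ▸ hρ.mul_ne_zero_of_one_lt hg hf
end

section
/- If ρ is a near weight function on an F-algebra R, then the set U_ρ = {f ∈ R : ρ(f) ≤ ρ(1)} is closed under multiplication and is an F-subalgebra of R. -/
/-- A near weight function: a normal near order function satisfying (N5).
Normality: `ρ` takes the value `0` on all nonzero elements of
`U_ρ = {f : ρ(f) ≤ ρ(1)}`, and `gcd ρ(M_ρ) = 1` (every common divisor of the
values of `ρ` on `M_ρ = {f : ρ(f) > ρ(1)}` is `1`, provided `M_ρ ≠ ∅`). -/
def IsNearWeight (F : Type*) {R : Type*} [Field F] [CommRing R] [Algebra F R]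
    (ρ : R → WithBot ℕ) : Prop :=
  IsNearOrder F ρ ∧
  (∀ f : R, f ≠ 0 → ρ f ≤ ρ 1 → ρ f = 0) ∧
  ((∃ f : R, ρ 1 < ρ f) →
    ∀ d : ℕ, (∀ f : R, ρ 1 < ρ f → (d : ℕ) ∣ WithBot.unbotD 0 (ρ f)) → d = 1) ∧
  (∀ f g : R, ρ (f * g) ≤ ρ f + ρ g) ∧
  (∀ f g : R, ρ 1 < ρ f → ρ 1 < ρ g → ρ (f * g) = ρ f + ρ g)

namespace IsNearOrder

variable {F R : Type*} [Field F] [CommRing R] [Algebra F R] {ρ : R → WithBot ℕ}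

theorem map_zero (hρ : IsNearOrder F ρ) : ρ 0 = ⊥ :=
  (hρ.1 0).mpr rfl

theorem map_add_le_map_one {f g : R} (hρ : IsNearOrder F ρ) (hf : ρ f ≤ ρ 1) (hg : ρ g ≤ ρ 1) :
    ρ (f + g) ≤ ρ 1 :=
  (hρ.2.2.1 f g).trans (max_le hf hg)

theorem map_algebraMap_le_map_one (hρ : IsNearOrder F ρ) (c : F) : ρ (algebraMap F R c) ≤ ρ 1 := by
  rcases eq_or_ne c 0 with rfl | hc
  · rw [RingHom.map_zero, hρ.map_zero]
    exact bot_le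
  · rw [Algebra.algebraMap_eq_smul_one, hρ.2.1 c 1 hc]

end IsNearOrder

namespace IsNearWeight

variable {F R : Type*} [Field F] [CommRing R] [Algebra F R] {ρ : R → WithBot ℕ}

theorem map_eq_zero_of_le_map_one {f : R} (hρ : IsNearWeight F ρ) (hf0 : f ≠ 0)
    (hf : ρ f ≤ ρ 1) : ρ f = 0 :=
  hρ.2.1 f hf0 hf

theorem map_one [Nontrivial R] (hρ : IsNearWeight F ρ) : ρ 1 = 0 :=
  hρ.map_eq_zero_of_le_map_one one_ne_zero le_rfl

/-- By normality, nonzero elements of `U_ρ` have value `0`, so (N5) bounds the value of a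
product of two of them by `0 + 0`. -/
theorem map_mul_le_map_one {f g : R} (hρ : IsNearWeight F ρ) (hf : ρ f ≤ ρ 1)
    (hg : ρ g ≤ ρ 1) : ρ (f * g) ≤ ρ 1 := by
  rcases eq_or_ne f 0 with rfl | hf0
  · rwa [zero_mul]
  rcases eq_or_ne g 0 with rfl | hg0
  · rwa [mul_zero]
  have : Nontrivial R := nontrivial_of_ne f 0 hf0
  calc ρ (f * g) ≤ ρ f + ρ g := hρ.2.2.2.1 f g
    _ = ρ 1 := by
      rw [hρ.map_eq_zero_of_le_map_one hf0 hf, hρ.map_eq_zero_of_le_map_one hg0 hg, hρ.map_one,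
        add_zero]

def subalgebraU (hρ : IsNearWeight F ρ) : Subalgebra F R where
  carrier := {f | ρ f ≤ ρ 1}
  mul_mem' := hρ.map_mul_le_map_one
  add_mem' := hρ.1.map_add_le_map_one
  algebraMap_mem' := hρ.1.map_algebraMap_le_map_one

end IsNearWeight

/-- for a near weight `ρ`, the set `U_ρ` is closed under products and
is an `F`-subalgebra of `R`. -/
theorem stmt_8 {F R : Type*} [Field F] [CommRing R] [Algebra F R]
    (ρ : R → WithBot ℕ) (hρ : IsNearWeight F ρ) :
    (∀ f g : R, ρ f ≤ ρ 1 → ρ g ≤ ρ 1 → ρ (f * g) ≤ ρ 1) ∧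
    (∃ S : Subalgebra F R, (S : Set R) = {f : R | ρ f ≤ ρ 1}) :=
  ⟨fun _ _ => hρ.map_mul_le_map_one, hρ.subalgebraU, rfl⟩
end

section
/- If ρ is a near weight function on an F-algebra R, then ρ(R \ {0}) is a numerical semigroup of finite genus, i.e., a submonoid of (ℕ, +) whose complement in ℕ is finite. -/
theorem AddSubmonoid.finite_compl_of_forall_dvd_imp_eq_one (S : AddSubmonoid ℕ)
    (hS : ∀ d : ℕ, (∀ n ∈ S, d ∣ n) → d = 1) : (Sᶜ : Set ℕ).Finite := by
  have hgcd : Nat.setGcd S = 1 := hS _ fun _ hn ↦ Nat.setGcd_dvd_of_mem hn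
  obtain ⟨N, hN⟩ := Nat.exists_mem_closure_of_ge (S : Set ℕ)
  refine (Set.finite_Iio N).subset fun n hn ↦ Set.mem_Iio.mpr <| lt_of_not_ge fun hge ↦ hn ?_
  simpa using hN n hge (hgcd ▸ one_dvd n)

section NearWeight

variable {F R : Type*} [Field F] [CommRing R] [Algebra F R] {ρ : R → WithBot ℕ}

theorem IsNearOrder.exists_eq_coe (hρ : IsNearOrder F ρ) {f : R} (hf : f ≠ 0) :
    ∃ n : ℕ, ρ f = n :=
  WithBot.ne_bot_iff_exists.mp (mt (hρ.1 f).mp hf) |>.imp fun _ h ↦ h.symm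

theorem IsNearOrder.ne_zero_of_lt (hρ : IsNearOrder F ρ) {f g : R} (h : ρ g < ρ f) : f ≠ 0 :=
  fun hf ↦ not_lt_bot ((hρ.1 f).mpr hf ▸ h)

theorem nontrivial_of_map_one_lt {f : R} (h : ρ 1 < ρ f) : Nontrivial R :=
  nontrivial_of_ne 1 f fun h1 ↦ h.ne (congrArg ρ h1)

theorem IsNearWeight.map_one_s9 [Nontrivial R] (hρ : IsNearWeight F ρ) : ρ 1 = 0 :=
  hρ.2.1 1 one_ne_zero le_rfl

theorem IsNearWeight.map_one_lt_coe [Nontrivial R] (hρ : IsNearWeight F ρ) {n : ℕ}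
    (hn : 0 < n) : ρ 1 < n := by
  rw [hρ.map_one_s9]
  exact_mod_cast hn

def IsNearWeight.valueSemigroup [Nontrivial R] (hρ : IsNearWeight F ρ) : AddSubmonoid ℕ where
  carrier := {n : ℕ | ∃ f : R, f ≠ 0 ∧ ρ f = (n : WithBot ℕ)}
  zero_mem' := ⟨1, one_ne_zero, by rw [hρ.map_one_s9]; rfl⟩
  add_mem' := by
    rintro a b ⟨f, hf, hfa⟩ ⟨g, hg, hgb⟩
    rcases Nat.eq_zero_or_pos a with rfl | ha
    · exact ⟨g, hg, by simpa using hgb⟩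
    rcases Nat.eq_zero_or_pos b with rfl | hb
    · exact ⟨f, hf, by simpa using hfa⟩
    have hfg : ρ (f * g) = ((a + b : ℕ) : WithBot ℕ) := by
      rw [hρ.2.2.2.2 f g (hfa ▸ hρ.map_one_lt_coe ha) (hgb ▸ hρ.map_one_lt_coe hb), hfa, hgb]
      rfl
    exact ⟨f * g, hρ.1.ne_zero_of_lt (hfg ▸ hρ.map_one_lt_coe (by omega)), hfg⟩

theorem IsNearWeight.eq_one_of_forall_dvd_mem_valueSemigroup [Nontrivial R]
    (hρ : IsNearWeight F ρ) (hM : ∃ f : R, ρ 1 < ρ f) (d : ℕ)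
    (hd : ∀ n ∈ hρ.valueSemigroup, d ∣ n) : d = 1 := by
  refine hρ.2.2.1 hM d fun f hf ↦ ?_
  have hf0 := hρ.1.ne_zero_of_lt hf
  obtain ⟨n, hn⟩ := hρ.1.exists_eq_coe hf0
  rw [hn]
  exact hd n ⟨f, hf0, hn⟩

end NearWeight

/-- for a near weight `ρ` (with `M_ρ ≠ ∅`), the value set
`ρ(R \ {0})` is a numerical semigroup of finite genus: a submonoid of `(ℕ,+)`
with finite complement. -/
theorem stmt_9 {F R : Type*} [Field F] [CommRing R] [Algebra F R]
    (ρ : R → WithBot ℕ) (hρ : IsNearWeight F ρ)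
    (hM : ∃ f : R, ρ 1 < ρ f) :
    (0 : ℕ) ∈ {n : ℕ | ∃ f : R, f ≠ 0 ∧ ρ f = (n : WithBot ℕ)} ∧
    (∀ a b : ℕ, a ∈ {n : ℕ | ∃ f : R, f ≠ 0 ∧ ρ f = (n : WithBot ℕ)} →
      b ∈ {n : ℕ | ∃ f : R, f ≠ 0 ∧ ρ f = (n : WithBot ℕ)} →
      a + b ∈ {n : ℕ | ∃ f : R, f ≠ 0 ∧ ρ f = (n : WithBot ℕ)}) ∧
    {n : ℕ | ∃ f : R, f ≠ 0 ∧ ρ f = (n : WithBot ℕ)}ᶜ.Finite := by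
  obtain ⟨f, hf⟩ := hM
  have := nontrivial_of_map_one_lt hf
  exact ⟨hρ.valueSemigroup.zero_mem, fun _ _ ↦ hρ.valueSemigroup.add_mem,
    hρ.valueSemigroup.finite_compl_of_forall_dvd_imp_eq_one
      (hρ.eq_one_of_forall_dvd_mem_valueSemigroup ⟨f, hf⟩)⟩
end

section
/- Let ρ, σ be two near weight functions on an F-algebra R such that the subsemigroup H(ρ,σ) = {(ρ(f), σ(f)) : f ∈ R, f ≠ 0} of ℕ² has finite complement in ℕ². Then ρ(R\{0}) = ℕ and σ(R\{0}) = ℕ. -/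
/-- The semigroup `H(ρ,σ) = {(ρ(f), σ(f)) : f ∈ R \ {0}} ⊆ ℕ²`. -/
def Hset {R : Type*} [CommRing R] (ρ σ : R → WithBot ℕ) : Set (ℕ × ℕ) :=
  {p : ℕ × ℕ | ∃ f : R, f ≠ 0 ∧ ρ f = (p.1 : WithBot ℕ) ∧ σ f = (p.2 : WithBot ℕ)}

/-! If `n` were not a value of `ρ` on `R \ {0}`, the whole infinite row `{n} × ℕ` would lie
outside `H(ρ,σ)`; likewise for `σ` and the column `ℕ × {n}`. -/

theorem exists_mk_mem_of_compl_finite {α β : Type*} [Infinite β] {S : Set (α × β)}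
    (hS : Sᶜ.Finite) (a : α) : ∃ b, (a, b) ∈ S := by
  by_contra! hrow
  exact Set.infinite_of_injective_forall_mem (Prod.mk_right_injective a) hrow hS

theorem exists_mk_mem_of_compl_finite' {α β : Type*} [Infinite α] {S : Set (α × β)}
    (hS : Sᶜ.Finite) (b : β) : ∃ a, (a, b) ∈ S := by
  by_contra! hcol
  exact Set.infinite_of_injective_forall_mem (Prod.mk_left_injective b) hcol hS

theorem stmt_11_general {R : Type*} [CommRing R]
    (ρ σ : R → WithBot ℕ)
    (hfin : {p : ℕ × ℕ | p ∉ Hset ρ σ}.Finite) :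
    {n : ℕ | ∃ f : R, f ≠ 0 ∧ ρ f = (n : WithBot ℕ)} = Set.univ ∧
    {n : ℕ | ∃ f : R, f ≠ 0 ∧ σ f = (n : WithBot ℕ)} = Set.univ := by
  refine ⟨Set.eq_univ_of_forall fun n => ?_, Set.eq_univ_of_forall fun n => ?_⟩
  · obtain ⟨_, f, hf, hρf, -⟩ := exists_mk_mem_of_compl_finite hfin n
    exact ⟨f, hf, hρf⟩
  · obtain ⟨_, f, hf, -, hσf⟩ := exists_mk_mem_of_compl_finite' hfin n
    exact ⟨f, hf, hσf⟩

/-- if `H(ρ,σ)` has finite complement in `ℕ²`, then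
`ρ(R \ {0}) = ℕ` and `σ(R \ {0}) = ℕ`. -/
theorem stmt_11 {F R : Type*} [Field F] [CommRing R] [Algebra F R]
    (ρ σ : R → WithBot ℕ) (hρ : IsNearWeight F ρ) (hσ : IsNearWeight F σ)
    (hfin : {p : ℕ × ℕ | p ∉ Hset ρ σ}.Finite) :
    {n : ℕ | ∃ f : R, f ≠ 0 ∧ ρ f = (n : WithBot ℕ)} = Set.univ ∧
    {n : ℕ | ∃ f : R, f ≠ 0 ∧ σ f = (n : WithBot ℕ)} = Set.univ :=
  stmt_11_general ρ σ hfin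
end

section
/- Let ρ, σ be well agreeing near weights on an F-algebra R with a good basis {f_i} (σ(f_i) minimal among values σ(f) with ρ(f) = i). Then for every gap m of H(σ) there exists exactly one index i with σ(f_i) = m. -/
/-!
Let `i₀` be the least `ρ`-level carrying an element `g` with `σ g = m`; it exists because only
finitely many `(i, m)` lie outside `H(ρ,σ)`, and `i₀ ≥ 1` because `m` is a gap of `H(σ)`.
If `σ(f_{i₀}) < m`, axiom (N4) for `ρ` cancels the leading terms of `g` and `f_{i₀}`; the
difference keeps `σ`-value `m` but sits at a lower `ρ`-level. Conversely, if
`σ(f_i) = σ(f_j) = m` with `i < j`, (N4) for `σ` cancels `f_j` against `f_i`; the difference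
stays at `ρ`-level `j` with `σ`-value below `σ(f_j)`, against the minimality of `f_j`.
-/

namespace IsNearOrder

variable {F R : Type*} [Field F] [CommRing R] [Algebra F R] {τ : R → WithBot ℕ}

theorem map_add_of_lt (hτ : IsNearOrder F τ) {a b : R} (hab : τ a < τ b) :
    τ (a + b) = τ b := by
  obtain ⟨-, hsmul, hadd, -⟩ := hτ
  refine le_antisymm ((hadd a b).trans (max_le hab.le le_rfl)) (not_lt.mp fun hlt => ?_)
  have hb : b = (a + b) + (-1 : F) • a := by rw [neg_one_smul]; ring
  have h := hadd (a + b) ((-1 : F) • a)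
  rw [hsmul (-1) a (by norm_num), ← hb] at h
  exact h.not_gt (max_lt hlt hab)

theorem map_sub_smul_of_ne (hτ : IsNearOrder F τ) {a b : R} (hab : τ a ≠ τ b) {c : F}
    (hc : c ≠ 0) : τ (a - c • b) = max (τ a) (τ b) := by
  have hcb : τ ((-c) • b) = τ b := hτ.2.1 _ _ (neg_ne_zero.mpr hc)
  rw [sub_eq_add_neg, ← neg_smul]
  rcases hab.lt_or_gt with h | h
  · rw [max_eq_right h.le, ← hcb]
    exact hτ.map_add_of_lt (by rwa [hcb])
  · rw [max_eq_left h.le, add_comm]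
    exact hτ.map_add_of_lt (by rwa [hcb])

theorem ne_zero_of_eq_coe (hτ : IsNearOrder F τ) {a : R} {n : ℕ} (h : τ a = n) : a ≠ 0 := by
  rintro rfl
  rw [(hτ.1 0).mpr rfl] at h
  exact WithBot.bot_ne_coe h

theorem exists_eq_coe_s15 (hτ : IsNearOrder F τ) {a : R} (ha : a ≠ 0) : ∃ n : ℕ, τ a = n :=
  (WithBot.ne_bot_iff_exists.mp (mt (hτ.1 a).mp ha)).imp fun _ h => h.symm

end IsNearOrder

section TwoNearOrders

variable {F R : Type*} [Field F] [CommRing R] [Algebra F R] {ρ σ : R → WithBot ℕ}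

theorem exists_sub_smul_lt_and_eq (hρ : IsNearOrder F ρ) (hσ : IsNearOrder F σ) {a b : R}
    (hρab : ρ a = ρ b) (hρ1 : ρ 1 < ρ a) (hσab : σ b < σ a) :
    ∃ c : F, ρ (a - c • b) < ρ a ∧ σ (a - c • b) = σ a := by
  obtain ⟨c, hc, hlt⟩ := hρ.2.2.2.2.2 a b hρab hρ1 (hρab ▸ hρ1)
  exact ⟨c, hlt, by rw [hσ.map_sub_smul_of_ne hσab.ne' hc, max_eq_left hσab.le]⟩

theorem map_eq_of_isLeast_level (hρ : IsNearOrder F ρ) (hσ : IsNearOrder F σ) {b : R}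
    {i m : ℕ} (hρ1 : ρ 1 < i) (hmem : (i, m) ∈ Hset ρ σ)
    (hleast : ∀ j < i, (j, m) ∉ Hset ρ σ) (hb : ρ b = i)
    (hbmin : ∀ h : R, ρ h = i → σ b ≤ σ h) : σ b = m := by
  obtain ⟨g, -, hgρ, hgσ⟩ : ∃ g : R, g ≠ 0 ∧ ρ g = i ∧ σ g = m := hmem
  refine ((hbmin g hgρ).trans_eq hgσ).antisymm (not_lt.mp fun hlt => ?_)
  obtain ⟨c, hρc, hσc⟩ :=
    exists_sub_smul_lt_and_eq hρ hσ (hgρ.trans hb.symm) (hgρ ▸ hρ1) (hgσ ▸ hlt)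
  have hσm := hσc.trans hgσ
  obtain ⟨j, hj⟩ := hρ.exists_eq_coe_s15 (hσ.ne_zero_of_eq_coe hσm)
  rw [hj, hgρ] at hρc
  exact hleast j (by exact_mod_cast hρc) ⟨_, hσ.ne_zero_of_eq_coe hσm, hj, hσm⟩

theorem le_of_map_eq_of_minimal (hρ : IsNearOrder F ρ) (hσ : IsNearOrder F σ) {a b : R}
    (hσab : σ a = σ b) (hσ1 : σ 1 < σ a) (hbmin : ∀ h : R, ρ h = ρ b → σ b ≤ σ h) :
    ρ b ≤ ρ a := by
  refine not_lt.mp fun hρab => ?_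
  obtain ⟨c, hσc, hρc⟩ := exists_sub_smul_lt_and_eq hσ hρ hσab.symm (hσab ▸ hσ1) hρab
  exact (hbmin _ hρc).not_gt hσc

end TwoNearOrders

section Hset

variable {R : Type*} [CommRing R] {ρ σ : R → WithBot ℕ}

theorem nontrivial_of_finite_compl_Hset (hfin : {p : ℕ × ℕ | p ∉ Hset ρ σ}.Finite) :
    Nontrivial R := by
  by_contra h
  rw [not_nontrivial_iff_subsingleton] at h
  exact Set.infinite_univ (hfin.subset fun _ _ ⟨g, hg, _⟩ => hg (Subsingleton.elim g 0))

theorem exists_mem_Hset_of_finite_compl (hfin : {p : ℕ × ℕ | p ∉ Hset ρ σ}.Finite) (m : ℕ) :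
    ∃ i, (i, m) ∈ Hset ρ σ := by
  by_contra! h
  exact Set.infinite_range_of_injective (Prod.mk_left_injective m)
    (hfin.subset (Set.range_subset_iff.mpr h))

end Hset

theorem stmt_15_general {F R : Type*} [Field F] [CommRing R] [Algebra F R]
    (ρ σ : R → WithBot ℕ) (hρ : IsNearWeight F ρ) (hσ : IsNearWeight F σ)
    (hfin : {p : ℕ × ℕ | p ∉ Hset ρ σ}.Finite)
    (f : ℕ → R) (hf0 : f 0 = 1)
    (hf : ∀ i : ℕ, 1 ≤ i → ρ (f i) = (i : WithBot ℕ))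
    (hmin : ∀ i : ℕ, 1 ≤ i → ∀ h : R, ρ h = (i : WithBot ℕ) → σ (f i) ≤ σ h)
    (m : ℕ) (hgap : (0, m) ∉ Hset ρ σ) :
    ∃! i : ℕ, σ (f i) = (m : WithBot ℕ) := by
  classical
  obtain ⟨hρo, hρnorm, -⟩ := hρ
  obtain ⟨hσo, hσnorm, -⟩ := hσ
  have := nontrivial_of_finite_compl_Hset hfin
  have hρ1 : ρ 1 = 0 := hρnorm 1 one_ne_zero le_rfl
  have hσ1 : σ 1 = 0 := hσnorm 1 one_ne_zero le_rfl
  have hm : 0 < m := Nat.pos_of_ne_zero <| by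
    rintro rfl
    exact hgap ⟨1, one_ne_zero, hρ1, hσ1⟩
  have hex := exists_mem_Hset_of_finite_compl hfin m
  have hpos : 0 < Nat.find hex := Nat.pos_of_ne_zero fun h => hgap (h ▸ Nat.find_spec hex)
  have hfind : σ (f (Nat.find hex)) = m :=
    map_eq_of_isLeast_level hρo hσo (hρ1 ▸ WithBot.coe_lt_coe.mpr hpos) (Nat.find_spec hex)
      (fun _ => Nat.find_min hex) (hf _ hpos) (hmin _ hpos)
  have hlevel : ∀ i j, 0 < i → 0 < j → σ (f i) = m → σ (f j) = m → j ≤ i := by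
    intro i j hi hj hσi hσj
    have hle := le_of_map_eq_of_minimal hρo hσo (hσi.trans hσj.symm)
      (by rw [hσi, hσ1]; exact_mod_cast hm) fun h hh => hmin j hj h (hh.trans (hf j hj))
    rw [hf i hi, hf j hj] at hle
    exact_mod_cast hle
  refine ⟨_, hfind, fun i hi => ?_⟩
  have hipos : 0 < i := Nat.pos_of_ne_zero <| by
    rintro rfl
    rw [hf0, hσ1] at hi
    exact hm.ne (WithBot.coe_inj.mp hi)
  exact le_antisymm (hlevel _ _ hpos hipos hfind hi) (hlevel _ _ hipos hpos hi hfind)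

/-- for every gap `m` of `H(σ)` there is exactly one index `i`
with `σ(f_i) = m`. -/
theorem stmt_15 {F R : Type*} [Field F] [CommRing R] [Algebra F R]
    (ρ σ : R → WithBot ℕ) (hρ : IsNearWeight F ρ) (hσ : IsNearWeight F σ)
    (hfin : {p : ℕ × ℕ | p ∉ Hset ρ σ}.Finite)
    (hU : {h : R | ρ h ≤ ρ 1} ∩ {h : R | σ h ≤ σ 1} = Set.range (algebraMap F R))
    (f : ℕ → R) (hf0 : f 0 = 1)
    (hf : ∀ i : ℕ, 1 ≤ i → ρ (f i) = (i : WithBot ℕ))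
    (hmin : ∀ i : ℕ, 1 ≤ i → ∀ h : R, ρ h = (i : WithBot ℕ) → σ (f i) ≤ σ h)
    (m : ℕ) (hgap : (0, m) ∉ Hset ρ σ) :
    ∃! i : ℕ, σ (f i) = (m : WithBot ℕ) :=
  stmt_15_general ρ σ hρ hσ hfin f hf0 hf hmin m hgap
end

section
/- Let ρ, σ be well agreeing near weights on an F-algebra R with good basis {f_i}, and let Λ_σ be the largest gap of H(σ). Then σ(f_i) = 0 for all but finitely many i, and σ(f_i) ≤ Λ_σ for all i. -/
/-!
A basis element `f i` with `i ≥ 1` minimizes `σ` among the elements of `ρ`-value `i`.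
If `(i, 0) ∈ H(ρ,σ)` this minimum is `0`, and all but finitely many `(i, 0)` lie in `H(ρ,σ)`.
If `σ(f i) = m > 0` with `(0, m) ∈ H(ρ,σ)`, say `(0, m) = (ρ g, σ g)`, then axiom (N4) for `σ`
gives `c` with `σ(f i - c g) < m`, while `ρ(f i - c g) = i` because `ρ g = 0 < i`; this
contradicts minimality, so `σ(f i)` is a gap of `H(σ)`, hence at most `Λ_σ`.
-/

section NearWeight

variable {F R : Type*} [Field F] [CommRing R] [Algebra F R]

namespace IsNearOrder

variable {ρ : R → WithBot ℕ}

theorem ne_zero_of_map_eq_coe (hρ : IsNearOrder F ρ) {a : R} {n : ℕ} (ha : ρ a = n) :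
    a ≠ 0 := by
  rintro rfl
  rw [(hρ.1 0).2 rfl] at ha
  exact WithBot.bot_ne_coe ha

theorem map_ne_bot (hρ : IsNearOrder F ρ) {a : R} (ha : a ≠ 0) : ρ a ≠ ⊥ :=
  fun h ↦ ha ((hρ.1 a).1 h)

theorem map_smul_le (hρ : IsNearOrder F ρ) (c : F) (a : R) : ρ (c • a) ≤ ρ a := by
  by_cases hc : c = 0
  · simp [hc, (hρ.1 0).2 rfl]
  · exact (hρ.2.1 c a hc).le

theorem map_neg (hρ : IsNearOrder F ρ) (a : R) : ρ (-a) = ρ a := by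
  simpa using hρ.2.1 (-1) a (by simp)

theorem map_add_eq_left (hρ : IsNearOrder F ρ) {a b : R} (h : ρ b < ρ a) :
    ρ (a + b) = ρ a := by
  refine le_antisymm ((hρ.2.2.1 a b).trans (max_eq_left h.le).le) ?_
  have hle := hρ.2.2.1 (a + b) (-b)
  rw [add_neg_cancel_right, hρ.map_neg] at hle
  exact (le_max_iff.1 hle).resolve_right h.not_ge

theorem map_sub_smul_eq_left (hρ : IsNearOrder F ρ) {a b : R} (c : F) (h : ρ b < ρ a) :
    ρ (a - c • b) = ρ a := by
  rw [sub_eq_add_neg]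
  exact hρ.map_add_eq_left ((hρ.map_neg _).trans_lt ((hρ.map_smul_le c b).trans_lt h))

end IsNearOrder

theorem IsNearWeight.map_one_le_zero {σ : R → WithBot ℕ} (hσ : IsNearWeight F σ) :
    σ 1 ≤ 0 := by
  by_cases h : (1 : R) = 0
  · simp [h, (hσ.1.1 0).2 rfl]
  · exact (hσ.2.1 1 h le_rfl).le

section Minimizer

variable {ρ σ : R → WithBot ℕ} {a : R}

theorem eq_zero_of_isMin_of_mem_Hset (hρ : IsNearOrder F ρ) (hσ : IsNearOrder F σ) {i : ℕ}
    (ha : ρ a = i) (hmin : ∀ h : R, ρ h = ρ a → σ a ≤ σ h) (hi : (i, 0) ∈ Hset ρ σ) :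
    σ a = 0 := by
  obtain ⟨g, -, hgρ, hgσ⟩ := hi
  have hle : σ a ≤ 0 := by simpa [hgσ] using hmin g (hgρ.trans ha.symm)
  obtain ⟨m, hm⟩ := WithBot.ne_bot_iff_exists.1 (hσ.map_ne_bot (hρ.ne_zero_of_map_eq_coe ha))
  exact hle.antisymm (hm ▸ WithBot.coe_le_coe.2 m.zero_le)

theorem ne_of_isMin_of_mem_Hset (hρ : IsNearOrder F ρ) (hσ : IsNearWeight F σ)
    (ha : 0 < ρ a) (hmin : ∀ h : R, ρ h = ρ a → σ a ≤ σ h) {m : ℕ} (hm : 0 < m)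
    (hmem : (0, m) ∈ Hset ρ σ) : σ a ≠ m := by
  intro ham
  obtain ⟨g, -, hgρ, hgσ⟩ := hmem
  have hσag : σ a = σ g := ham.trans hgσ.symm
  have hσ1a : σ 1 < σ a := hσ.map_one_le_zero.trans_lt (by rw [ham]; exact_mod_cast hm)
  obtain ⟨c, -, hlt⟩ := hσ.1.2.2.2.2.2 a g hσag hσ1a (hσag ▸ hσ1a)
  have hρg : ρ g < ρ a := by rwa [hgρ, Nat.cast_zero]
  exact (hmin _ (hρ.map_sub_smul_eq_left c hρg)).not_gt hlt

theorem le_of_isMin_of_forall_gap_le (hρ : IsNearOrder F ρ) (hσ : IsNearWeight F σ)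
    (ha : 0 < ρ a) (hmin : ∀ h : R, ρ h = ρ a → σ a ≤ σ h) {Λ : ℕ}
    (hΛ : ∀ t : ℕ, (0, t) ∉ Hset ρ σ → t ≤ Λ) : σ a ≤ Λ := by
  rcases eq_or_ne (σ a) ⊥ with hbot | hne
  · exact hbot ▸ bot_le
  obtain ⟨m, hm⟩ := WithBot.ne_bot_iff_exists.1 hne
  rw [← hm, ← Nat.cast_withBot, Nat.cast_le]
  by_contra! hΛm
  have hmem : (0, m) ∈ Hset ρ σ := by_contra fun h ↦ hΛm.not_ge (hΛ m h)
  exact ne_of_isMin_of_mem_Hset hρ hσ ha hmin (Nat.zero_lt_of_lt hΛm) hmem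
    (by rw [← hm, Nat.cast_withBot])

end Minimizer

end NearWeight

theorem stmt_17_general {F R : Type*} [Field F] [CommRing R] [Algebra F R]
    (ρ σ : R → WithBot ℕ) (hρ : IsNearWeight F ρ) (hσ : IsNearWeight F σ)
    (hfin : {p : ℕ × ℕ | p ∉ Hset ρ σ}.Finite)
    (f : ℕ → R) (hf0 : f 0 = 1)
    (hf : ∀ i : ℕ, 1 ≤ i → ρ (f i) = (i : WithBot ℕ))
    (hmin : ∀ i : ℕ, 1 ≤ i → ∀ h : R, ρ h = (i : WithBot ℕ) → σ (f i) ≤ σ h)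
    (Λ : ℕ)
    (hΛmax : ∀ t : ℕ, (0, t) ∉ Hset ρ σ → t ≤ Λ) :
    {i : ℕ | σ (f i) ≠ (0 : WithBot ℕ)}.Finite ∧
    ∀ i : ℕ, σ (f i) ≤ (Λ : WithBot ℕ) := by
  have hfmin : ∀ i, 1 ≤ i → ∀ h : R, ρ h = ρ (f i) → σ (f i) ≤ σ h := fun i hi h hh ↦
    hmin i hi h (hh.trans (hf i hi))
  constructor
  · have hgaps : {i : ℕ | σ (f i) ≠ 0} ⊆ insert 0 ((·, 0) ⁻¹' {p | p ∉ Hset ρ σ}) := by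
      intro i hi
      rcases Nat.eq_zero_or_pos i with rfl | hpos
      · exact Set.mem_insert 0 _
      · exact Or.inr fun hmem ↦
          hi (eq_zero_of_isMin_of_mem_Hset hρ.1 hσ.1 (hf i hpos) (hfmin i hpos) hmem)
    exact ((hfin.preimage fun _ _ _ _ h ↦ congrArg Prod.fst h).insert 0).subset hgaps
  · intro i
    rcases Nat.eq_zero_or_pos i with rfl | hpos
    · exact hf0 ▸ hσ.map_one_le_zero.trans (by exact_mod_cast Nat.zero_le Λ)
    have hρpos : 0 < ρ (f i) := by rw [hf i hpos]; exact_mod_cast hpos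
    exact le_of_isMin_of_forall_gap_le hρ.1 hσ hρpos (hfmin i hpos) hΛmax

/-- `σ(f_i) = 0` for all but finitely many `i`, and
`σ(f_i) ≤ Λ_σ` (the largest gap of `H(σ)`) for all `i`. -/
theorem stmt_17 {F R : Type*} [Field F] [CommRing R] [Algebra F R]
    (ρ σ : R → WithBot ℕ) (hρ : IsNearWeight F ρ) (hσ : IsNearWeight F σ)
    (hfin : {p : ℕ × ℕ | p ∉ Hset ρ σ}.Finite)
    (hU : {h : R | ρ h ≤ ρ 1} ∩ {h : R | σ h ≤ σ 1} = Set.range (algebraMap F R))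
    (f : ℕ → R) (hf0 : f 0 = 1)
    (hf : ∀ i : ℕ, 1 ≤ i → ρ (f i) = (i : WithBot ℕ))
    (hmin : ∀ i : ℕ, 1 ≤ i → ∀ h : R, ρ h = (i : WithBot ℕ) → σ (f i) ≤ σ h)
    (Λ : ℕ) (hΛgap : (0, Λ) ∉ Hset ρ σ)
    (hΛmax : ∀ t : ℕ, (0, t) ∉ Hset ρ σ → t ≤ Λ) :
    {i : ℕ | σ (f i) ≠ (0 : WithBot ℕ)}.Finite ∧
    ∀ i : ℕ, σ (f i) ≤ (Λ : WithBot ℕ) :=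
  stmt_17_general ρ σ hρ hσ hfin f hf0 hf hmin Λ hΛmax
end

section
/- Let S ⊆ ℕ² be a subsemigroup with finite complement (the semigroup H(ρ,σ) of a pair of well agreeing near weights), let γ be the number of gaps of H(ρ) = {m : (m,0) ∈ S}, and for i ∈ ℕ define τ(i) = min{t : (i,t) ∈ S}. Fix m ≥ Λ_σ (the largest gap of H(σ) = {t : (0,t) ∈ S}). For r ∈ ℕ define Σ(j) = max{τ(0),…,τ(j)} and N_r = {(i,j) ∈ ℕ² : i + j = r + 1 and τ(i) + Σ(j) ≤ m}. Then #N_r ≥ #(H(ρ) ∩ [1, r+1]); in particular, if r ≥ γ then #N_r ≥ r - γ + 1. -/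
/-!
Every `i ∈ H(ρ) ∩ [1, r + 1]` has `τ(i) = 0`, and `Σ(j) ≤ Λ_σ ≤ m` always, so `i ↦ (i, r + 1 - i)`
injects `H(ρ) ∩ [1, r + 1]` into `N_r`. Since `H(ρ)` misses only `γ` naturals, it meets
`[1, r + 1]` in at least `r + 1 - γ` points.
-/

/-- The set `N_r` of the n-order bound, for the threshold `m`. -/
def nOrderSet (τ : ℕ → ℕ) (m r : ℕ) : Set (ℕ × ℕ) :=
  {p | p.1 + p.2 = r + 1 ∧ τ p.1 + (Finset.range (p.2 + 1)).sup τ ≤ m}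

lemma nOrderSet_finite (τ : ℕ → ℕ) (m r : ℕ) : (nOrderSet τ m r).Finite := by
  refine (Set.finite_Iic ((r + 1, r + 1) : ℕ × ℕ)).subset ?_
  rintro ⟨i, j⟩ ⟨hij, -⟩
  simp only [Set.mem_Iic, Prod.mk_le_mk]
  omega

lemma ncard_le_ncard_nOrderSet {τ : ℕ → ℕ} {m : ℕ} (hτ : ∀ j, τ j ≤ m) (r : ℕ) {A : Set ℕ}
    (hA : ∀ i ∈ A, τ i = 0 ∧ i ≤ r + 1) : A.ncard ≤ (nOrderSet τ m r).ncard := by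
  refine Set.ncard_le_ncard_of_injOn (fun i => (i, r + 1 - i)) (fun i hi => ?_)
    (fun a _ b _ h => congrArg Prod.fst h) (nOrderSet_finite τ m r)
  obtain ⟨hτi, hir⟩ := hA i hi
  have hsup : (Finset.range (r + 1 - i + 1)).sup τ ≤ m := Finset.sup_le fun j _ => hτ j
  refine ⟨by omega, ?_⟩
  simpa [hτi] using hsup

lemma sub_ncard_compl_le_ncard_Icc {P : ℕ → Prop} (hP : {i | ¬ P i}.Finite) (n : ℕ) :
    n - {i | ¬ P i}.ncard ≤ {i | P i ∧ 1 ≤ i ∧ i ≤ n}.ncard := by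
  have hIcc : (Set.Icc 1 n).ncard = n := by
    rw [← Finset.coe_Icc, Set.ncard_coe_finset, Nat.card_Icc, Nat.add_sub_cancel]
  have hsub : Set.Icc 1 n \ {i | ¬ P i} ⊆ {i | P i ∧ 1 ≤ i ∧ i ≤ n} :=
    fun i ⟨⟨h1, hn⟩, hi⟩ => ⟨not_not.mp hi, h1, hn⟩
  calc n - {i | ¬ P i}.ncard = (Set.Icc 1 n).ncard - {i | ¬ P i}.ncard := by rw [hIcc]
    _ ≤ (Set.Icc 1 n \ {i | ¬ P i}).ncard := Set.le_ncard_sdiff _ _ hP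
    _ ≤ {i | P i ∧ 1 ≤ i ∧ i ≤ n}.ncard :=
      Set.ncard_le_ncard hsub ((Set.finite_Icc 1 n).subset fun i hi => ⟨hi.2.1, hi.2.2⟩)

theorem stmt_18_general
    (S : Set (ℕ × ℕ))
    (hSfin : {p : ℕ × ℕ | p ∉ S}.Finite)
    (τ : ℕ → ℕ)
    (γ : ℕ) (hγ : {i : ℕ | (i, 0) ∉ S}.ncard = γ)
    (Λ : ℕ)
    (hτ0 : ∀ i : ℕ, (i, 0) ∈ S → τ i = 0)
    (hτΛ : ∀ j : ℕ, τ j ≤ Λ)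
    (m : ℕ) (hm : Λ ≤ m)
    (r : ℕ) :
    {i : ℕ | (i, 0) ∈ S ∧ 1 ≤ i ∧ i ≤ r + 1}.ncard ≤
      {p : ℕ × ℕ | p.1 + p.2 = r + 1 ∧
        τ p.1 + (Finset.range (p.2 + 1)).sup τ ≤ m}.ncard ∧
    (γ ≤ r → r + 1 - γ ≤
      {p : ℕ × ℕ | p.1 + p.2 = r + 1 ∧
        τ p.1 + (Finset.range (p.2 + 1)).sup τ ≤ m}.ncard) := by
  have hgaps : {i : ℕ | (i, 0) ∉ S}.Finite :=
    hSfin.preimage (f := fun i => (i, 0)) fun a _ b _ h => congrArg Prod.fst h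
  have hHρ : {i : ℕ | (i, 0) ∈ S ∧ 1 ≤ i ∧ i ≤ r + 1}.ncard ≤ (nOrderSet τ m r).ncard :=
    ncard_le_ncard_nOrderSet (fun j => (hτΛ j).trans hm) r fun i hi => ⟨hτ0 i hi.1, hi.2.2⟩
  refine ⟨hHρ, fun _ => ?_⟩
  rw [← hγ]
  exact (sub_ncard_compl_le_ncard_Icc hgaps (r + 1)).trans hHρ

/-- combinatorial n-order bound estimate. With
`N_r = {(i,j) : i + j = r + 1, τ(i) + Σ(j) ≤ m}` where `Σ(j) = max{τ(0),…,τ(j)}`,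
one has `#N_r ≥ #(H(ρ) ∩ [1, r+1])`; in particular `#N_r ≥ r - γ + 1` for `r ≥ γ`. -/
theorem stmt_18
    (S : Set (ℕ × ℕ)) (hS0 : (0, 0) ∈ S)
    (hSadd : ∀ p q : ℕ × ℕ, p ∈ S → q ∈ S → p + q ∈ S)
    (hSfin : {p : ℕ × ℕ | p ∉ S}.Finite)
    (τ : ℕ → ℕ) (hτmem : ∀ i : ℕ, (i, τ i) ∈ S)
    (hτmin : ∀ i t : ℕ, (i, t) ∈ S → τ i ≤ t)
    (γ : ℕ) (hγ : {i : ℕ | (i, 0) ∉ S}.ncard = γ)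
    (Λ : ℕ) (hΛgap : (0, Λ) ∉ S) (hΛmax : ∀ t : ℕ, (0, t) ∉ S → t ≤ Λ)
    (hτ0 : ∀ i : ℕ, (i, 0) ∈ S → τ i = 0)
    (hτΛ : ∀ j : ℕ, τ j ≤ Λ)
    (m : ℕ) (hm : Λ ≤ m)
    (r : ℕ) :
    {i : ℕ | (i, 0) ∈ S ∧ 1 ≤ i ∧ i ≤ r + 1}.ncard ≤
      {p : ℕ × ℕ | p.1 + p.2 = r + 1 ∧
        τ p.1 + (Finset.range (p.2 + 1)).sup τ ≤ m}.ncard ∧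
    (γ ≤ r → r + 1 - γ ≤
      {p : ℕ × ℕ | p.1 + p.2 = r + 1 ∧
        τ p.1 + (Finset.range (p.2 + 1)).sup τ ≤ m}.ncard) :=
  stmt_18_general S hSfin τ γ hγ Λ hτ0 hτΛ m hm r
end
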